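/- Let k be a commutative ring, let S be a set, and let F be the free group freely generated by S. Then the family {s − 1 : s ∈ S} is a basis of the augmentation ideal kI_F as a left kF-module; in particular kI_F is a free left kF-module of rank |S|. -/

import Mathlib

/-! Since `gh - 1 = g (h - 1) + (g - 1)` and `g⁻¹ - 1 = -g⁻¹ (g - 1)`, the elements `s - 1`
generate every `g - 1` as a left ideal, and an `x` with `ε x = 0` equals `∑ c_g (g - 1)`.
For independence, each `f : S → kF` determines a derivation `D` of `kF` with
`D (ab) = D a * ε b + a * D b` and `D s = f s`: `w ↦ (D w, w)` is the homomorphism from `F` to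
the affine group `kF ⋊ kFˣ` with `s ↦ (f s, s)`. On `kI_F` such a `D` is left `kF`-linear, so the
Fox derivative `∂/∂t` (`f = δ_t`) reads off the `t`-coordinate of a combination of the `s - 1`. -/

/-- The augmentation homomorphism `kG → k`, sending every group element to `1`. -/
noncomputable def augHom (k : Type*) [CommRing k] (G : Type*) [Group G] :
    MonoidAlgebra k G →ₐ[k] k :=
  MonoidAlgebra.lift k k G 1

/-- The augmentation ideal `kI_G`: the kernel of the augmentation map `kG → k`. -/
noncomputable def augIdeal (k : Type*) [CommRing k] (G : Type*) [Group G] :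
    Ideal (MonoidAlgebra k G) :=
  RingHom.ker (augHom k G)

/-- `kI_Λ^Γ` for `Λ` (the image of) a subgroup given by a subset `s` of `Γ`: the left
ideal of `kΓ` generated by the elements `λ - 1` for `λ ∈ s`. -/
noncomputable def relAugIdeal (k : Type*) [CommRing k] {G : Type*} [Group G] (s : Set G) :
    Ideal (MonoidAlgebra k G) :=
  Ideal.span ((fun g => (MonoidAlgebra.of k G g : MonoidAlgebra k G) - 1) '' s)

open MonoidAlgebra

section Augmentation

variable {k : Type*} [CommRing k] {G : Type*} [Group G]

@[simp] lemma augHom_single (g : G) (c : k) : augHom k G (single g c) = c := by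
  simp [augHom, lift_single]

lemma of_sub_one_mem_augIdeal (g : G) : of k G g - 1 ∈ augIdeal k G := by
  simp [augIdeal, of_apply]

lemma of_sub_one_mem_relAugIdeal {s : Set G} {g : G} (hg : g ∈ Subgroup.closure s) :
    of k G g - 1 ∈ relAugIdeal k s := by
  induction hg using Subgroup.closure_induction with
  | mem g hg => exact Ideal.subset_span ⟨g, hg, rfl⟩
  | one => rw [map_one, sub_self]; exact zero_mem _
  | mul x y _ _ hx hy =>
    rw [show of k G (x * y) - 1 = of k G x * (of k G y - 1) + (of k G x - 1) by
      rw [map_mul]; noncomm_ring]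
    exact add_mem (Ideal.mul_mem_left _ _ hy) hx
  | inv x _ hx =>
    rw [show of k G x⁻¹ - 1 = -of k G x⁻¹ * (of k G x - 1) by
      rw [neg_mul, mul_sub, ← map_mul, inv_mul_cancel, map_one, mul_one, neg_sub]]
    exact Ideal.mul_mem_left _ _ hx

lemma sub_augHom_mem_relAugIdeal {s : Set G} (hs : Subgroup.closure s = ⊤) (x : k[G]) :
    x - algebraMap k k[G] (augHom k G x) ∈ relAugIdeal k s := by
  induction x using induction_linear with
  | zero => simp
  | add x y hx hy =>
    rw [map_add, map_add, add_sub_add_comm]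
    exact add_mem hx hy
  | single g c =>
    rw [augHom_single, Algebra.algebraMap_eq_smul_one, ← smul_of, ← smul_sub]
    exact Submodule.smul_of_tower_mem _ c (of_sub_one_mem_relAugIdeal (hs ▸ Subgroup.mem_top g))

theorem augIdeal_eq_relAugIdeal {s : Set G} (hs : Subgroup.closure s = ⊤) :
    augIdeal k G = relAugIdeal k s := by
  refine le_antisymm (fun x hx => ?_) (Ideal.span_le.2 ?_)
  · have hx0 : augHom k G x = 0 := hx
    simpa [hx0] using sub_augHom_mem_relAugIdeal hs x
  · rintro _ ⟨g, -, rfl⟩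
    exact of_sub_one_mem_augIdeal g

end Augmentation

def Units.mulLeftMulAut (R : Type*) [Ring R] : Rˣ →* MulAut (Multiplicative R) where
  toFun u := AddEquiv.toMultiplicative (DistribMulAction.toAddEquiv R u)
  map_one' := by ext; simp
  map_mul' u v := by ext; simp [mul_smul]

@[simp] lemma Units.toAdd_mulLeftMulAut_apply {R : Type*} [Ring R] (u : Rˣ)
    (x : Multiplicative R) : (Units.mulLeftMulAut R u x).toAdd = u * x.toAdd :=
  rfl

section FoxDerivative

variable (k : Type*) [CommRing k] {S : Type*}

noncomputable def foxDerivHom (f : S → k[FreeGroup S]) :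
    FreeGroup S →* Multiplicative k[FreeGroup S] ⋊[Units.mulLeftMulAut _] k[FreeGroup S]ˣ :=
  FreeGroup.lift fun s => ⟨.ofAdd (f s), (of k _).toHomUnits (.of s)⟩

noncomputable def foxDeriv (f : S → k[FreeGroup S]) : k[FreeGroup S] →ₗ[k] k[FreeGroup S] :=
  Finsupp.linearCombination k (fun w => (foxDerivHom k f w).left.toAdd) ∘ₗ
    (coeffLinearEquiv k).toLinearMap

variable {k} (f : S → k[FreeGroup S])

lemma foxDerivHom_right (w : FreeGroup S) :
    ((foxDerivHom k f w).right : k[FreeGroup S]) = of k _ w := by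
  have : SemidirectProduct.rightHom.comp (foxDerivHom k f) = (of k _).toHomUnits :=
    FreeGroup.ext_hom _ _ fun s => by simp [foxDerivHom]
  exact congr($this w)

lemma foxDeriv_single (w : FreeGroup S) (c : k) :
    foxDeriv k f (single w c) = c • (foxDerivHom k f w).left.toAdd :=
  Finsupp.linearCombination_single k c w

lemma foxDeriv_of (w : FreeGroup S) :
    foxDeriv k f (of k _ w) = (foxDerivHom k f w).left.toAdd := by
  rw [of_apply, foxDeriv_single, one_smul]

lemma foxDeriv_of_sub_one (s : S) : foxDeriv k f (of k _ (FreeGroup.of s) - 1) = f s := by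
  rw [map_sub, ← map_one (of k _), foxDeriv_of, foxDeriv_of, map_one]
  simp [foxDerivHom]

lemma foxDeriv_mul (a b : k[FreeGroup S]) :
    foxDeriv k f (a * b) = augHom k _ b • foxDeriv k f a + a * foxDeriv k f b := by
  induction a using induction_linear with
  | zero => simp
  | add x y hx hy => simp only [add_mul, map_add, hx, hy, smul_add]; abel
  | single u c =>
    induction b using induction_linear with
    | zero => simp
    | add x y hx hy => simp only [mul_add, map_add, hx, hy, add_smul]; abel
    | single v d =>
      rw [single_mul_single, foxDeriv_single, foxDeriv_single, foxDeriv_single, augHom_single,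
        map_mul, SemidirectProduct.mul_left, ← smul_of, toAdd_mul,
        Units.toAdd_mulLeftMulAut_apply, foxDerivHom_right]
      simp only [smul_add, smul_smul, smul_mul_assoc, mul_smul_comm, mul_comm d c]

lemma foxDeriv_mul_of_mem_augIdeal (a : k[FreeGroup S]) {x : k[FreeGroup S]}
    (hx : x ∈ augIdeal k _) : foxDeriv k f (a * x) = a * foxDeriv k f x := by
  rw [foxDeriv_mul, show augHom k _ x = 0 from hx, zero_smul, zero_add]

end FoxDerivative

theorem linearIndependent_freeGroup_of_sub_one (k S : Type*) [CommRing k] :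
    LinearIndependent k[FreeGroup S] fun s : S => of k _ (FreeGroup.of s) - 1 := by
  classical
  refine linearIndependent_iff.2 fun l hl => Finsupp.ext fun t => ?_
  have h := congr(foxDeriv k (Pi.single t 1) $hl)
  simp only [Finsupp.linearCombination_apply, Finsupp.sum, map_sum, smul_eq_mul,
    foxDeriv_mul_of_mem_augIdeal _ _ (of_sub_one_mem_augIdeal _), foxDeriv_of_sub_one] at h
  simpa [Pi.single_apply] using h

/-- For a free group `F` freely generated by `S`, the family `{s - 1 : s ∈ S}` is a
basis of the augmentation ideal `kI_F` as a left `kF`-module; in particular `kI_F` is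
free of rank `|S|`. -/
theorem augmentationIdeal_freeGroup_basis
    (k : Type) [CommRing k] (S : Type) :
    ∃ b : Module.Basis S (MonoidAlgebra k (FreeGroup S)) ↥(augIdeal k (FreeGroup S)),
      ∀ s : S, (b s : MonoidAlgebra k (FreeGroup S)) =
        MonoidAlgebra.of k (FreeGroup S) (FreeGroup.of s) - 1 := by
  have hspan : Submodule.span k[FreeGroup S]
      (Set.range fun s : S => of k _ (FreeGroup.of s) - 1) = augIdeal k (FreeGroup S) := by
    rw [augIdeal_eq_relAugIdeal (FreeGroup.closure_range_of S), relAugIdeal, ← Set.range_comp]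
    rfl
  refine ⟨(Module.Basis.span (linearIndependent_freeGroup_of_sub_one k S)).map
    (LinearEquiv.ofEq _ _ hspan), fun s => ?_⟩
  simp [Module.Basis.span_apply]
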